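/- arXiv:2010.10749 — 8 statements merged into one kernel-verified Lean document; each statement's English description precedes it below -/
import Mathlib

section
/- Let (X,d,m) be a finite measured metric space and suppose that for all R > 0 the cardinality of every closed ball of radius R is bounded by N_R. Given R > 0 and s ∈ (0,1), there exists a subset Y ⊆ X such that: (1) for all x, y ∈ Y with d(x,y) ≤ R one has s·m(x) ≤ m(y) ≤ m(x)/s; and (2) m(X \ Y) ≤ s·N_R·m(Y). -/
/-!
Process the points in order of decreasing mass and keep a point `a` unless some point `y`
already kept within distance `R` of `a` satisfies `m a < s * m y`. A kept point is then at most
as heavy as the previously kept points near it and at least an `s`-fraction of each of them,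
which gives the ratio bounds. Every discarded point `x` has a kept point `y` near it with `m x ≤ s * m y`;
summing, each kept `y` is charged by at most `N_R` discarded points.
-/

open scoped Classical
open Finset

section

variable {X : Type*} [PseudoMetricSpace X]

def MassRatioBounded (R s : ℝ) (m : X → ℝ) (Y : Finset X) : Prop :=
  ∀ x ∈ Y, ∀ y ∈ Y, dist x y ≤ R → s * m x ≤ m y ∧ m y ≤ m x / s

lemma ratio_bounds_of_le {s a b : ℝ} (hs0 : 0 < s) (hs1 : s ≤ 1) (ha : 0 ≤ a) (hab : a ≤ b)
    (hba : s * b ≤ a) : (s * a ≤ b ∧ b ≤ a / s) ∧ (s * b ≤ a ∧ a ≤ b / s) := by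
  have hsa : s * a ≤ a := mul_le_of_le_one_left ha hs1
  refine ⟨⟨hsa.trans hab, ?_⟩, hba, ?_⟩ <;> rw [le_div_iff₀ hs0] <;> linarith

lemma MassRatioBounded.insert {R s : ℝ} {m : X → ℝ} {Y : Finset X} {a : X}
    (hY : MassRatioBounded R s m Y) (hs0 : 0 < s) (hs1 : s ≤ 1) (ha : 0 ≤ m a)
    (ha_min : ∀ y ∈ Y, m a ≤ m y) (ha_near : ∀ y ∈ Y, dist a y ≤ R → s * m y ≤ m a) :
    MassRatioBounded R s m (insert a Y) := by
  have haa := ratio_bounds_of_le hs0 hs1 ha le_rfl (mul_le_of_le_one_left ha hs1)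
  intro x hx y hy hxy
  rcases mem_insert.1 hx with rfl | hxY <;> rcases mem_insert.1 hy with rfl | hyY
  · exact haa.1
  · exact (ratio_bounds_of_le hs0 hs1 ha (ha_min y hyY) (ha_near y hyY hxy)).1
  · rw [dist_comm] at hxy
    exact (ratio_bounds_of_le hs0 hs1 ha (ha_min x hxY) (ha_near x hxY hxy)).2
  · exact hY x hxY y hyY hxy

lemma exists_massRatioBounded_subset {R s : ℝ} {m : X → ℝ} (hs0 : 0 < s) (hs1 : s ≤ 1)
    (hm0 : ∀ x, 0 ≤ m x) (T : Finset X) :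
    ∃ Y ⊆ T, MassRatioBounded R s m Y ∧
      ∀ x ∈ T \ Y, ∃ y ∈ Y, dist x y ≤ R ∧ m x ≤ s * m y := by
  induction T using Finset.induction_on_min_value m with
  | empty => exact ⟨∅, subset_rfl, by simp [MassRatioBounded], by simp⟩
  | insert a T haT ha_min ih =>
    obtain ⟨Y, hYT, hY, hcover⟩ := ih
    by_cases ha_near : ∀ y ∈ Y, dist a y ≤ R → s * m y ≤ m a
    · refine ⟨insert a Y, insert_subset_insert a hYT,
        hY.insert hs0 hs1 (hm0 a) (fun y hy => ha_min y (hYT hy)) ha_near, ?_⟩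
      intro x hx
      rw [insert_sdiff_insert] at hx
      obtain ⟨y, hy, hxy⟩ := hcover x (sdiff_subset_sdiff subset_rfl (subset_insert a Y) hx)
      exact ⟨y, mem_insert_of_mem hy, hxy⟩
    · refine ⟨Y, hYT.trans (subset_insert a T), hY, fun x hx => ?_⟩
      obtain ⟨hxT, hxY⟩ := mem_sdiff.1 hx
      rcases mem_insert.1 hxT with rfl | hxT
      · push Not at ha_near
        obtain ⟨y, hy, hxy, hlt⟩ := ha_near
        exact ⟨y, hy, hxy, hlt.le⟩
      · exact hcover x (mem_sdiff.2 ⟨hxT, hxY⟩)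

/-- Double counting: each `y ∈ Y` is charged only by the at most `N` points of `S` near it. -/
lemma sum_le_mul_sum_of_forall_exists_near {R s : ℝ} {m : X → ℝ} {S Y : Finset X} {N : ℕ}
    (hs0 : 0 ≤ s) (hm0 : ∀ y ∈ Y, 0 ≤ m y)
    (hcover : ∀ x ∈ S, ∃ y ∈ Y, dist x y ≤ R ∧ m x ≤ s * m y)
    (hN : ∀ y ∈ Y, #{x ∈ S | dist x y ≤ R} ≤ N) :
    ∑ x ∈ S, m x ≤ s * N * ∑ y ∈ Y, m y := by
  have hterm_nonneg : ∀ y ∈ Y, 0 ≤ s * m y := fun y hy => mul_nonneg hs0 (hm0 y hy)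
  calc ∑ x ∈ S, m x ≤ ∑ x ∈ S, ∑ y ∈ Y with dist x y ≤ R, s * m y := by
        refine sum_le_sum fun x hx => ?_
        obtain ⟨y, hy, hxy, hmxy⟩ := hcover x hx
        exact hmxy.trans <| single_le_sum (fun z hz => hterm_nonneg z (mem_filter.1 hz).1)
          (mem_filter.2 ⟨hy, hxy⟩)
    _ = ∑ y ∈ Y, ∑ x ∈ S with dist x y ≤ R, s * m y :=
        sum_comm' fun x y => by simp only [mem_filter]; tauto
    _ = ∑ y ∈ Y, #{x ∈ S | dist x y ≤ R} * (s * m y) := by simp only [sum_const, nsmul_eq_mul]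
    _ ≤ ∑ y ∈ Y, N * (s * m y) := sum_le_sum fun y hy =>
        mul_le_mul_of_nonneg_right (by exact_mod_cast hN y hy) (hterm_nonneg y hy)
    _ = s * N * ∑ y ∈ Y, m y := by rw [← mul_sum, ← mul_sum, ← mul_assoc, mul_comm (N : ℝ)]

end

theorem stmt1_general {X : Type*} [Fintype X] [MetricSpace X]
    (m : X → ℝ) (hm0 : ∀ x, 0 ≤ m x)
    (R s : ℝ) (hs : s ∈ Set.Ioo (0:ℝ) 1)
    (NR : ℕ) (hNR : ∀ x : X, (univ.filter (fun y => dist x y ≤ R)).card ≤ NR) :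
    ∃ Y : Finset X,
      (∀ x ∈ Y, ∀ y ∈ Y, dist x y ≤ R → s * m x ≤ m y ∧ m y ≤ m x / s) ∧
      ∑ x ∈ univ \ Y, m x ≤ s * NR * ∑ x ∈ Y, m x := by
  obtain ⟨hs0, hs1⟩ := hs
  obtain ⟨Y, -, hY, hcover⟩ := exists_massRatioBounded_subset (R := R) hs0 hs1.le hm0 univ
  refine ⟨Y, hY, sum_le_mul_sum_of_forall_exists_near hs0.le (fun y _ => hm0 y) hcover ?_⟩
  intro y _
  refine (card_le_card fun x hx => ?_).trans (hNR y)
  simp only [mem_filter, mem_univ, true_and] at hx ⊢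
  rw [dist_comm]
  exact hx.2

/-- existence of a subspace with bounded measure ratios at scale R,
whose complement has small measure. -/
theorem stmt1 {X : Type*} [Fintype X] [Nonempty X] [MetricSpace X]
    (m : X → ℝ) (hm0 : ∀ x, 0 ≤ m x) (hm : 0 < ∑ x, m x)
    (R s : ℝ) (hR : 0 < R) (hs : s ∈ Set.Ioo (0:ℝ) 1)
    (NR : ℕ) (hNR : ∀ x : X, (univ.filter (fun y => dist x y ≤ R)).card ≤ NR) :
    ∃ Y : Finset X,
      (∀ x ∈ Y, ∀ y ∈ Y, dist x y ≤ R → s * m x ≤ m y ∧ m y ≤ m x / s) ∧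
      ∑ x ∈ univ \ Y, m x ≤ s * NR * ∑ x ∈ Y, m x :=
  stmt1_general m hm0 R s hs NR hNR
end

section
/- Let (V,E) be a finite connected graph with valency bounded by K ≥ 1, m: V → (0,∞) a measure with full support such that s·m(u) ≤ m(v) ≤ m(u)/s for every edge {u,v}, s ∈ (0,1). Suppose (V,E,m) satisfies the c-expansion property: for every A ⊆ V with 0 < m(A) ≤ m(V)/2, m(∂A) > c·m(A), where ∂A is the vertex boundary. Define the conductance a(u,v) := m(u)+m(v) for edges and a(u,v):=0 otherwise, and μ(u) := Σ_v a(u,v). Then for every A ⊆ V with 0 < m(A) ≤ m(V)/2 one has a(∂^E A) > (c·s/K)·μ(A), where ∂^E A is the set of edges with exactly one endpoint in A and a(∂^E A) = Σ_{e ∈ ∂^E A} a(e). -/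
open scoped Classical
open Finset

/-- for a c-measured expander with bounded valency and bounded measure
ratios on adjacent vertices, the (μ,a,m)-Cheeger constant is bounded below by c·s/K. -/
theorem stmt3 {V : Type*} [Fintype V] (G : SimpleGraph V) (hconn : G.Connected)
    (K : ℕ) (hK : 1 ≤ K) (hdeg : ∀ v, (univ.filter (fun u => G.Adj v u)).card ≤ K)
    (m : V → ℝ) (hm : ∀ v, 0 < m v)
    (s : ℝ) (hs : s ∈ Set.Ioo (0:ℝ) 1)
    (hratio : ∀ u v, G.Adj u v → s * m u ≤ m v ∧ m v ≤ m u / s)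
    (c : ℝ) (hc : 0 < c)
    (hexp : ∀ A : Finset V, 0 < ∑ v ∈ A, m v → ∑ v ∈ A, m v ≤ (∑ v, m v) / 2 →
      c * ∑ v ∈ A, m v <
        ∑ v ∈ univ.filter (fun x => x ∉ A ∧ ∃ u ∈ A, G.Adj u x), m v) :
    ∀ A : Finset V, 0 < ∑ v ∈ A, m v → ∑ v ∈ A, m v ≤ (∑ v, m v) / 2 →
      (c * s / K) * (∑ u ∈ A, ∑ v, if G.Adj u v then m u + m v else 0) <
        ∑ u ∈ A, ∑ v ∈ univ.filter (fun v => v ∉ A ∧ G.Adj u v), (m u + m v) := by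
  intro A hA1 hA2
  obtain ⟨hs0, hs1⟩ := hs
  have hK0 : (0:ℝ) < K := by exact_mod_cast Nat.lt_of_lt_of_le Nat.zero_lt_one hK
  have hKne : (K:ℝ) ≠ 0 := ne_of_gt hK0
  have hsne : s ≠ 0 := ne_of_gt hs0
  have h1s : (0:ℝ) < 1/s := one_div_pos.mpr hs0
  set M := ∑ v ∈ A, m v with hM
  have hcB : c * M < ∑ v ∈ univ.filter (fun x => x ∉ A ∧ ∃ u ∈ A, G.Adj u x), m v :=
    hexp A hA1 hA2
  -- Step 1: μ(A) ≤ K * (1 + 1/s) * M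
  have step1 : (∑ u ∈ A, ∑ v, if G.Adj u v then m u + m v else 0)
      ≤ (K : ℝ) * (1 + 1/s) * M := by
    have h1 : ∀ u ∈ A, (∑ v, if G.Adj u v then m u + m v else 0)
        ≤ (K : ℝ) * ((1 + 1/s) * m u) := by
      intro u _
      rw [← Finset.sum_filter]
      have hterm : ∀ v ∈ univ.filter (fun v => G.Adj u v),
          m u + m v ≤ (1 + 1/s) * m u := by
        intro v hv
        rw [Finset.mem_filter] at hv
        have h2 := (hratio u v hv.2).2
        have heq : (1 + 1/s) * m u = m u + m u / s := by field_simp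
        linarith
      calc (∑ v ∈ univ.filter (fun v => G.Adj u v), (m u + m v))
          ≤ ∑ v ∈ univ.filter (fun v => G.Adj u v), (1 + 1/s) * m u :=
            Finset.sum_le_sum hterm
        _ = ((univ.filter (fun v => G.Adj u v)).card : ℝ) * ((1 + 1/s) * m u) := by
            rw [Finset.sum_const, nsmul_eq_mul]
        _ ≤ (K : ℝ) * ((1 + 1/s) * m u) := by
            have hcard : ((univ.filter (fun v => G.Adj u v)).card : ℝ) ≤ (K : ℝ) := by
              exact_mod_cast hdeg u
            have hpos : 0 ≤ (1 + 1/s) * m u := by nlinarith [hm u]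
            exact mul_le_mul_of_nonneg_right hcard hpos
    calc (∑ u ∈ A, ∑ v, if G.Adj u v then m u + m v else 0)
        ≤ ∑ u ∈ A, (K : ℝ) * ((1 + 1/s) * m u) := Finset.sum_le_sum h1
      _ = (K : ℝ) * (1 + 1/s) * M := by
          rw [hM, Finset.mul_sum]
          exact Finset.sum_congr rfl fun x _ => by ring
  -- Step 2: edge boundary sum ≥ (1+s) * vertex boundary measure
  have step2 : (1 + s) * (∑ v ∈ univ.filter (fun x => x ∉ A ∧ ∃ u ∈ A, G.Adj u x), m v)
      ≤ ∑ u ∈ A, ∑ v ∈ univ.filter (fun v => v ∉ A ∧ G.Adj u v), (m u + m v) := by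
    have hrw : (∑ u ∈ A, ∑ v ∈ univ.filter (fun v => v ∉ A ∧ G.Adj u v), (m u + m v))
        = ∑ v : V, ∑ u ∈ A, if v ∉ A ∧ G.Adj u v then m u + m v else 0 := by
      rw [Finset.sum_comm]
      refine Finset.sum_congr rfl fun u _ => ?_
      rw [Finset.sum_filter]
    rw [hrw, Finset.mul_sum]
    have hsub : (∑ v ∈ univ.filter (fun x => x ∉ A ∧ ∃ u ∈ A, G.Adj u x), (1 + s) * m v)
        ≤ ∑ v ∈ univ.filter (fun x => x ∉ A ∧ ∃ u ∈ A, G.Adj u x),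
            ∑ u ∈ A, if v ∉ A ∧ G.Adj u v then m u + m v else 0 := by
      refine Finset.sum_le_sum fun v hv => ?_
      rw [Finset.mem_filter] at hv
      obtain ⟨_, hvA, u0, hu0A, hadj⟩ := hv
      have hnn : ∀ u ∈ A, 0 ≤ if v ∉ A ∧ G.Adj u v then m u + m v else 0 := by
        intro u _
        split
        · nlinarith [hm u, hm v]
        · exact le_rfl
      have hsingle : (if v ∉ A ∧ G.Adj u0 v then m u0 + m v else 0)
          ≤ ∑ u ∈ A, if v ∉ A ∧ G.Adj u v then m u + m v else 0 :=
        Finset.single_le_sum hnn hu0A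
      have h' : m v * s ≤ m u0 := (le_div_iff₀ hs0).1 (hratio u0 v hadj).2
      have h'' : (1 + s) * m v ≤ m u0 + m v := by nlinarith
      rw [if_pos ⟨hvA, hadj⟩] at hsingle
      linarith
    refine hsub.trans ?_
    refine Finset.sum_le_sum_of_subset_of_nonneg (Finset.filter_subset _ _) ?_
    intro v _ _
    refine Finset.sum_nonneg fun u _ => ?_
    split
    · nlinarith [hm u, hm v]
    · exact le_rfl
  -- combine
  have hfac : (0:ℝ) < c * s / K := by positivity
  calc (c * s / K) * (∑ u ∈ A, ∑ v, if G.Adj u v then m u + m v else 0)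
      ≤ (c * s / K) * ((K : ℝ) * (1 + 1/s) * M) :=
        mul_le_mul_of_nonneg_left step1 hfac.le
    _ = (1 + s) * (c * M) := by field_simp; ring
    _ < (1 + s) * (∑ v ∈ univ.filter (fun x => x ∉ A ∧ ∃ u ∈ A, G.Adj u x), m v) := by
        have hp : (0:ℝ) < 1 + s := by linarith
        exact mul_lt_mul_of_pos_left hcB hp
    _ ≤ _ := step2
end

section
/- Let {(X_n, d_n, m_n)} be a sequence of finite probability-measured metric spaces satisfying: for every ε > 0 there exists R_ε > 0 such that for all n and all A, B ⊆ X_n with d(A,B) ≥ R_ε one has m_n(A)·m_n(B) < ε. Then for any α ∈ (0, 1/2], β ∈ (0,1], and c ∈ (0,1) there exists R > 0 such that: for any n, any subset Y ⊆ X_n with m_n(Y) ≥ β, and any A ⊆ Y with α·m_n(Y) ≤ m_n(A) ≤ (1/2)·m_n(Y), one has m_n(∂_R^Y A) > c·m_n(A), where ∂_R^Y A = {y ∈ Y \ A : d(y,A) ≤ R}. -/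
open scoped Classical
open Finset

/-- the quasi-locality condition (far sets have small product of measures)
implies uniform asymptotic expansion for subspaces of measure at least β. -/
theorem stmt5 {X : ℕ → Type*} [∀ n, Fintype (X n)] [∀ n, MetricSpace (X n)]
    (m : ∀ n, X n → ℝ) (hm0 : ∀ n x, 0 ≤ m n x) (hm1 : ∀ n, ∑ x, m n x = 1)
    (hql : ∀ ε > (0:ℝ), ∃ Rε > (0:ℝ), ∀ n : ℕ, ∀ A B : Finset (X n),
      (∀ a ∈ A, ∀ b ∈ B, Rε ≤ dist a b) →
      (∑ x ∈ A, m n x) * (∑ x ∈ B, m n x) < ε) :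
    ∀ α ∈ Set.Ioc (0:ℝ) (1/2), ∀ β ∈ Set.Ioc (0:ℝ) 1, ∀ c ∈ Set.Ioo (0:ℝ) 1,
      ∃ R > (0:ℝ), ∀ n : ℕ, ∀ Y A : Finset (X n), A ⊆ Y →
        β ≤ ∑ x ∈ Y, m n x →
        α * ∑ x ∈ Y, m n x ≤ ∑ x ∈ A, m n x →
        ∑ x ∈ A, m n x ≤ (∑ x ∈ Y, m n x) / 2 →
        c * ∑ x ∈ A, m n x <
          ∑ x ∈ Y.filter (fun y => y ∉ A ∧ ∃ a ∈ A, dist y a ≤ R), m n x := by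
  rintro α ⟨hα0, hα2⟩ β ⟨hβ0, hβ1⟩ c ⟨hc0, hc1⟩
  have hε : (0:ℝ) < α * β ^ 2 * (1 - c) / 2 := div_pos (mul_pos (mul_pos hα0 (pow_pos hβ0 2)) (sub_pos.mpr hc1)) two_pos
  obtain ⟨R, hR0, hR⟩ := hql _ hε
  refine ⟨R, hR0, fun n Y A hAY hβY hαA hA2 => ?_⟩
  by_contra hcon
  push_neg at hcon
  set B : Finset (X n) := Y.filter (fun y => ¬ (y ∈ A ∨ ∃ a ∈ A, dist y a ≤ R)) with hB
  have hfar : ∀ a ∈ A, ∀ b ∈ B, R ≤ dist a b := by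
    intro a ha b hb
    rw [hB, mem_filter] at hb
    push_neg at hb
    rw [dist_comm]
    exact le_of_lt (hb.2.2 a ha)
  have key := hR n A B hfar
  -- split sum over Y
  have hsplit : ∑ x ∈ Y, m n x =
      (∑ x ∈ A, m n x) +
      (∑ x ∈ Y.filter (fun y => y ∉ A ∧ ∃ a ∈ A, dist y a ≤ R), m n x) +
      (∑ x ∈ B, m n x) := by
    have h1 := Finset.sum_filter_add_sum_filter_not Y
      (fun y => y ∈ A ∨ ∃ a ∈ A, dist y a ≤ R) (m n)
    have h2 : Y.filter (fun y => y ∈ A ∨ ∃ a ∈ A, dist y a ≤ R)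
        = A ∪ Y.filter (fun y => y ∉ A ∧ ∃ a ∈ A, dist y a ≤ R) := by
      ext x
      simp only [mem_filter, mem_union]
      constructor
      · rintro ⟨hx, h | h⟩
        · exact Or.inl h
        · by_cases hxA : x ∈ A
          · exact Or.inl hxA
          · exact Or.inr ⟨hx, hxA, h⟩
      · rintro (h | ⟨hx, hxA, h⟩)
        · exact ⟨hAY h, Or.inl h⟩
        · exact ⟨hx, Or.inr h⟩
    have hdisj : Disjoint A (Y.filter (fun y => y ∉ A ∧ ∃ a ∈ A, dist y a ≤ R)) := by
      rw [Finset.disjoint_left]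
      intro x hx hx'
      exact ((mem_filter.mp hx').2.1) hx
    rw [h2, Finset.sum_union hdisj] at h1
    rw [← h1]
  set mY := ∑ x ∈ Y, m n x
  set mA := ∑ x ∈ A, m n x
  set mB := ∑ x ∈ B, m n x
  set mD := ∑ x ∈ Y.filter (fun y => y ∉ A ∧ ∃ a ∈ A, dist y a ≤ R), m n x
  have hmY0 : 0 < mY := lt_of_lt_of_le hβ0 hβY
  have hmA0 : 0 ≤ mA := Finset.sum_nonneg fun x _ => hm0 n x
  have hcA : c * mA ≤ c * (mY / 2) := mul_le_mul_of_nonneg_left hA2 hc0.le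
  have hmB : (1 - c) * mY / 2 ≤ mB := by linarith
  have h1 : α * mY * ((1 - c) * mY / 2) ≤ mA * mB :=
    mul_le_mul hαA hmB (by nlinarith) hmA0
  have h2 : β * β ≤ mY * mY := mul_le_mul hβY hβY hβ0.le hmY0.le
  have h3 : α * (1 - c) / 2 * (β * β) ≤ α * (1 - c) / 2 * (mY * mY) :=
    mul_le_mul_of_nonneg_left h2 (by nlinarith)
  nlinarith [h1, h3]
end

section
/- Let (X,d,m) be a finite measured metric space, c ∈ (0,1), R > 0. Let F ⊆ X be a subset which is maximal (with respect to inclusion) in the family F := {A ⊆ X : m(A) ≤ m(X)/2 and m(∂_R A) ≤ c·m(A)} (note ∅ ∈ F). Set Y := X \ F. Then for every A ⊆ Y with 0 < m(A) ≤ m(X)/2 − m(F), one has m(∂_R^Y A) > c·m(A), where ∂_R^Y A = {y ∈ Y \ A : d(y,A) ≤ R}. -/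
open scoped Classical
open Finset

/-- removing a maximal non-expanding set F yields a subspace
Y = X \ F on which all small sets expand. -/
theorem stmt6 {X : Type*} [Fintype X] [MetricSpace X]
    (m : X → ℝ) (hm0 : ∀ x, 0 ≤ m x)
    (c : ℝ) (hc : c ∈ Set.Ioo (0:ℝ) 1) (R : ℝ) (hR : 0 < R)
    (F : Finset X)
    (hF : ∑ x ∈ F, m x ≤ (∑ x, m x) / 2 ∧
      ∑ x ∈ univ.filter (fun y => y ∉ F ∧ ∃ a ∈ F, dist y a ≤ R), m x ≤ c * ∑ x ∈ F, m x)
    (hFmax : ∀ F' : Finset X, F ⊆ F' →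
      (∑ x ∈ F', m x ≤ (∑ x, m x) / 2 ∧
        ∑ x ∈ univ.filter (fun y => y ∉ F' ∧ ∃ a ∈ F', dist y a ≤ R), m x ≤
          c * ∑ x ∈ F', m x) → F' = F) :
    ∀ A : Finset X, A ⊆ univ \ F →
      0 < ∑ x ∈ A, m x →
      ∑ x ∈ A, m x ≤ (∑ x, m x) / 2 - ∑ x ∈ F, m x →
      c * ∑ x ∈ A, m x <
        ∑ x ∈ (univ \ F).filter (fun y => y ∉ A ∧ ∃ a ∈ A, dist y a ≤ R), m x := by

  intro A hA hApos hAle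
  by_contra h
  push_neg at h
  have hdisj : Disjoint F A := by
    rw [Finset.disjoint_left]
    intro x hxF hxA
    have := hA hxA
    simp only [Finset.mem_sdiff, Finset.mem_univ, true_and] at this
    exact this hxF
  have hsum : ∑ x ∈ F ∪ A, m x = ∑ x ∈ F, m x + ∑ x ∈ A, m x :=
    Finset.sum_union hdisj
  have hbd : ∑ x ∈ univ.filter (fun y => y ∉ F ∪ A ∧ ∃ a ∈ F ∪ A, dist y a ≤ R), m x ≤
      c * ∑ x ∈ F ∪ A, m x := by
    have hsub : univ.filter (fun y => y ∉ F ∪ A ∧ ∃ a ∈ F ∪ A, dist y a ≤ R) ⊆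
        (univ.filter (fun y => y ∉ F ∧ ∃ a ∈ F, dist y a ≤ R)) ∪
        ((univ \ F).filter (fun y => y ∉ A ∧ ∃ a ∈ A, dist y a ≤ R)) := by
      intro y hy
      simp only [Finset.mem_filter, Finset.mem_union, Finset.mem_univ, true_and,
        Finset.mem_sdiff] at hy ⊢
      obtain ⟨hyn, a, haFA, hda⟩ := hy
      push_neg at hyn
      rcases haFA with haF | haA
      · exact Or.inl ⟨hyn.1, a, haF, hda⟩
      · refine Or.inr ?_
        refine ⟨hyn.1, hyn.2, a, haA, hda⟩
    have h1 : ∑ x ∈ univ.filter (fun y => y ∉ F ∪ A ∧ ∃ a ∈ F ∪ A, dist y a ≤ R), m x ≤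
        ∑ x ∈ (univ.filter (fun y => y ∉ F ∧ ∃ a ∈ F, dist y a ≤ R)) ∪
          ((univ \ F).filter (fun y => y ∉ A ∧ ∃ a ∈ A, dist y a ≤ R)), m x :=
      Finset.sum_le_sum_of_subset_of_nonneg hsub (fun i _ _ => hm0 i)
    have h2 : ∑ x ∈ (univ.filter (fun y => y ∉ F ∧ ∃ a ∈ F, dist y a ≤ R)) ∪
          ((univ \ F).filter (fun y => y ∉ A ∧ ∃ a ∈ A, dist y a ≤ R)), m x ≤
        ∑ x ∈ univ.filter (fun y => y ∉ F ∧ ∃ a ∈ F, dist y a ≤ R), m x +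
        ∑ x ∈ (univ \ F).filter (fun y => y ∉ A ∧ ∃ a ∈ A, dist y a ≤ R), m x := by
      have := Finset.sum_union_inter (s₁ := univ.filter (fun y => y ∉ F ∧ ∃ a ∈ F, dist y a ≤ R))
        (s₂ := (univ \ F).filter (fun y => y ∉ A ∧ ∃ a ∈ A, dist y a ≤ R)) (f := m)
      have hnn : 0 ≤ ∑ x ∈ (univ.filter (fun y => y ∉ F ∧ ∃ a ∈ F, dist y a ≤ R)) ∩
          ((univ \ F).filter (fun y => y ∉ A ∧ ∃ a ∈ A, dist y a ≤ R)), m x :=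
        Finset.sum_nonneg (fun i _ => hm0 i)
      linarith
    rw [hsum, mul_add]
    exact le_trans h1 (le_trans h2 (add_le_add hF.2 h))
  have key := hFmax (F ∪ A) Finset.subset_union_left ⟨by rw [hsum]; linarith, hbd⟩
  have hAne : A.Nonempty := by
    by_contra hne
    rw [Finset.not_nonempty_iff_eq_empty] at hne
    simp [hne] at hApos
  obtain ⟨a, ha⟩ := hAne
  have haF : a ∈ F := key ▸ Finset.mem_union_right F ha
  have := hA ha
  simp only [Finset.mem_sdiff, Finset.mem_univ, true_and] at this
  exact this haF
end

section
/- Let (V,E) be a finite connected graph with valency bounded by K ≥ 1 and m a full-support measure on V satisfying: for some c' > 0 and p ∈ [1,∞), for every f: V → ℂ, Σ_{u~v} |f(u)−f(v)|^p (m(u)+m(v)) ≥ c' Σ_{u,v∈V} |f(u)−f(v)|^p m(u)m(v)/m(V) (the L^p-Poincaré inequality), and s·m(u) ≤ m(v) ≤ m(u)/s for adjacent u,v (s ∈ (0,1)). Then for every L-Lipschitz map f from (V, edge-path metric) to an L^p-space, Σ_{u,v∈V} ‖f(u)−f(v)‖^p m(u)m(v)/m(V)² ≤ ((1+s)·K·L^p)/(s·c').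 -/
/-!
The scalar Poincaré inequality, applied for a.e. `z` to the family `u ↦ f u z`, integrates to the
same inequality for the `L^p` norms, because `‖f u - f v‖ ^ p = ∫ ‖f u z - f v z‖ ^ p`.
Only edges contribute to its right-hand side; there `‖f u - f v‖ ≤ L` and
`m u + m v ≤ (1 + s) / s * m u`, and each vertex has at most `K` neighbours, so the right-hand side
is at most `(1 + s) / s * K * L ^ p * m(V)`.
-/

open scoped Classical
open Finset MeasureTheory

namespace MeasureTheory.Lp

variable {Z E : Type*} [MeasurableSpace Z] {μ : Measure Z} [NormedAddCommGroup E] {p : ℝ}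

theorem norm_rpow_eq_integral (hp : 0 < p) (f : Lp E (ENNReal.ofReal p) μ) :
    ‖f‖ ^ p = ∫ z, ‖f z‖ ^ p ∂μ := by
  rw [Lp.norm_def, toReal_eLpNorm (Lp.aestronglyMeasurable f),
    lpNorm_eq_integral_norm_rpow_toReal (by simpa using hp) ENNReal.ofReal_ne_top
      (Lp.aestronglyMeasurable f), ENNReal.toReal_ofReal hp.le,
    Real.rpow_inv_rpow (integral_nonneg fun _ ↦ by positivity) hp.ne']

theorem integrable_norm_rpow (hp : 0 < p) (f : Lp E (ENNReal.ofReal p) μ) :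
    Integrable (fun z ↦ ‖f z‖ ^ p) μ := by
  simpa [ENNReal.toReal_ofReal hp.le] using
    (Lp.memLp f).integrable_norm_rpow (by simpa using hp) ENNReal.ofReal_ne_top

theorem sum_mul_norm_sub_rpow_le {ι : Type*} [Fintype ι] (hp : 0 < p) (a b : ι → ι → ℝ)
    (h : ∀ g : ι → E, ∑ u, ∑ v, a u v * ‖g u - g v‖ ^ p ≤ ∑ u, ∑ v, b u v * ‖g u - g v‖ ^ p)
    (f : ι → Lp E (ENNReal.ofReal p) μ) :
    ∑ u, ∑ v, a u v * ‖f u - f v‖ ^ p ≤ ∑ u, ∑ v, b u v * ‖f u - f v‖ ^ p := by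
  have hint (w : ι → ι → ℝ) :
      Integrable (fun z ↦ ∑ u, ∑ v, w u v * ‖(f u - f v) z‖ ^ p) μ :=
    integrable_finsetSum _ fun u _ ↦ integrable_finsetSum _ fun v _ ↦
      (integrable_norm_rpow hp _).const_mul _
  have hsum (w : ι → ι → ℝ) : ∑ u, ∑ v, w u v * ‖f u - f v‖ ^ p =
      ∫ z, ∑ u, ∑ v, w u v * ‖(f u - f v) z‖ ^ p ∂μ := by
    rw [integral_finsetSum _ fun u _ ↦ integrable_finsetSum _ fun v _ ↦
      (integrable_norm_rpow hp _).const_mul _]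
    refine sum_congr rfl fun u _ ↦ ?_
    rw [integral_finsetSum _ fun v _ ↦ (integrable_norm_rpow hp _).const_mul _]
    simp only [integral_const_mul, norm_rpow_eq_integral hp]
  rw [hsum, hsum]
  refine integral_mono_ae (hint a) (hint b) ?_
  have hsub : ∀ᵐ z ∂μ, ∀ u v, (f u - f v) z = f u z - f v z :=
    ae_all_iff.2 fun u ↦ ae_all_iff.2 fun v ↦ Lp.coeFn_sub (f u) (f v)
  filter_upwards [hsub] with z hz
  simpa only [hz] using h fun u ↦ f u z

end MeasureTheory.Lp

theorem SimpleGraph.sum_sum_ite_adj_le {V : Type*} [Fintype V] (G : SimpleGraph V) {K : ℕ}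
    (hdeg : ∀ v, (univ.filter (fun u => G.Adj v u)).card ≤ K) {x : V → V → ℝ} {y : V → ℝ}
    (hx : ∀ u v, G.Adj u v → x u v ≤ y u) (hy : ∀ u, 0 ≤ y u) :
    ∑ u, ∑ v, (if G.Adj u v then x u v else 0) ≤ K * ∑ u, y u := by
  rw [mul_sum]
  refine sum_le_sum fun u _ ↦ ?_
  rw [← sum_filter]
  calc ∑ v ∈ univ.filter (G.Adj u ·), x u v
      ≤ (univ.filter (G.Adj u ·)).card • y u :=
        sum_le_card_nsmul _ _ _ fun v hv ↦ hx u v (mem_filter.1 hv).2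
    _ ≤ K * y u := by
        rw [nsmul_eq_mul]
        exact mul_le_mul_of_nonneg_right (mod_cast hdeg u) (hy u)

theorem SimpleGraph.sum_ite_adj_mul_add_le {V : Type*} [Fintype V] (G : SimpleGraph V) {K : ℕ}
    (hdeg : ∀ v, (univ.filter (fun u => G.Adj v u)).card ≤ K) {m : V → ℝ} (hm : ∀ v, 0 ≤ m v)
    {s : ℝ} (hs : 0 < s) (hratio : ∀ u v, G.Adj u v → m v ≤ m u / s) {d : V → V → ℝ} {D : ℝ}
    (hD : 0 ≤ D) (hd : ∀ u v, G.Adj u v → d u v ≤ D) :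
    ∑ u, ∑ v, (if G.Adj u v then d u v * (m u + m v) else 0) ≤ (1 + s) / s * K * D * ∑ u, m u := by
  calc _ ≤ K * ∑ u, (1 + s) / s * D * m u :=
        G.sum_sum_ite_adj_le hdeg (fun u v huv ↦ ?_) fun u ↦ by have := hm u; positivity
    _ = (1 + s) / s * K * D * ∑ u, m u := by
        rw [mul_sum, mul_sum]; exact sum_congr rfl fun _ _ ↦ by ring
  have hmuv : m u + m v ≤ (1 + s) / s * m u :=
    calc m u + m v ≤ m u + m u / s := by linarith [hratio u v huv]
      _ = (1 + s) / s * m u := by field_simp; ring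
  calc d u v * (m u + m v) ≤ D * ((1 + s) / s * m u) :=
        mul_le_mul (hd u v huv) hmuv (by linarith [hm u, hm v]) hD
    _ = (1 + s) / s * D * m u := by ring

theorem stmt11_general {V : Type*} [Fintype V] (G : SimpleGraph V)
    (K : ℕ) (hdeg : ∀ v, (univ.filter (fun u => G.Adj v u)).card ≤ K)
    (m : V → ℝ) (hm : ∀ v, 0 < m v)
    (s : ℝ) (hs : s ∈ Set.Ioo (0:ℝ) 1)
    (hratio : ∀ u v, G.Adj u v → s * m u ≤ m v ∧ m v ≤ m u / s)
    (p : ℝ) (hp : 1 ≤ p) (c' : ℝ) (hc' : 0 < c')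
    (hPoincare : ∀ g : V → ℂ,
      c' * ∑ u, ∑ v, ‖g u - g v‖ ^ p * (m u * m v) / (∑ w, m w) ≤
        ∑ u, ∑ v, if G.Adj u v then ‖g u - g v‖ ^ p * (m u + m v) else 0)
    {Z : Type*} [MeasurableSpace Z] (ν : MeasureTheory.Measure Z)
    (f : V → MeasureTheory.Lp ℂ (ENNReal.ofReal p) ν)
    (L : ℝ) (hL : 0 < L)
    (hLip : ∀ u v, ‖f u - f v‖ ≤ L * (G.dist u v : ℝ)) :
    ∑ u, ∑ v, ‖f u - f v‖ ^ p * (m u * m v) / (∑ w, m w) ^ 2 ≤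
      (1 + s) * K * L ^ p / (s * c') := by
  obtain ⟨hs0, -⟩ := hs
  have hp0 : 0 < p := by linarith
  set M := ∑ w, m w
  have hM : 0 ≤ M := sum_nonneg fun w _ ↦ (hm w).le
  have hleft (d : V → V → ℝ) : c' * ∑ u, ∑ v, d u v * (m u * m v) / M =
      ∑ u, ∑ v, c' * (m u * m v) / M * d u v := by
    simp only [mul_sum]; congr! 2 with u - v -; ring
  have hright (d : V → V → ℝ) : ∑ u, ∑ v, (if G.Adj u v then d u v * (m u + m v) else 0) =
      ∑ u, ∑ v, (if G.Adj u v then m u + m v else 0) * d u v := by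
    congr! 2 with u - v -; split_ifs <;> ring
  have hPoincareLp := Lp.sum_mul_norm_sub_rpow_le hp0 _ _
    (fun g ↦ (hleft _).symm.trans_le ((hPoincare g).trans_eq (hright _))) f
  rw [← hleft, ← hright] at hPoincareLp
  have hedges := G.sum_ite_adj_mul_add_le (d := fun u v ↦ ‖f u - f v‖ ^ p)
    (D := L ^ p) hdeg (fun v ↦ (hm v).le) hs0
    (fun u v huv ↦ (hratio u v huv).2) (by positivity) fun u v huv ↦
      -- `Lp ℂ (ENNReal.ofReal p) ν` carries no normed-group instance, so no `norm_nonneg`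
      Real.rpow_le_rpow ENNReal.toReal_nonneg
        (by simpa [SimpleGraph.dist_eq_one_iff_adj.2 huv] using hLip u v) hp0.le
  set A := ∑ u, ∑ v, ‖f u - f v‖ ^ p * (m u * m v) / M
  have hLHS : ∑ u, ∑ v, ‖f u - f v‖ ^ p * (m u * m v) / M ^ 2 = A / M := by
    simp only [A, sum_div, div_div, sq]
  rw [hLHS]
  refine div_le_of_le_mul₀ hM (by positivity) ?_
  calc A = c' * A / c' := by field_simp
    _ ≤ (1 + s) / s * K * L ^ p * M / c' :=
        div_le_div_of_nonneg_right (hPoincareLp.trans hedges) hc'.le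
    _ = (1 + s) * K * L ^ p / (s * c') * M := by field_simp

/-- from the L^p-Poincaré inequality, Lipschitz maps into an L^p-space
have uniformly bounded mean p-th displacement. -/
theorem stmt11 {V : Type*} [Fintype V] (G : SimpleGraph V) (hconn : G.Connected)
    (K : ℕ) (hK : 1 ≤ K) (hdeg : ∀ v, (univ.filter (fun u => G.Adj v u)).card ≤ K)
    (m : V → ℝ) (hm : ∀ v, 0 < m v)
    (s : ℝ) (hs : s ∈ Set.Ioo (0:ℝ) 1)
    (hratio : ∀ u v, G.Adj u v → s * m u ≤ m v ∧ m v ≤ m u / s)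
    (p : ℝ) (hp : 1 ≤ p) (c' : ℝ) (hc' : 0 < c')
    (hPoincare : ∀ g : V → ℂ,
      c' * ∑ u, ∑ v, ‖g u - g v‖ ^ p * (m u * m v) / (∑ w, m w) ≤
        ∑ u, ∑ v, if G.Adj u v then ‖g u - g v‖ ^ p * (m u + m v) else 0)
    {Z : Type*} [MeasurableSpace Z] (ν : MeasureTheory.Measure Z)
    (f : V → MeasureTheory.Lp ℂ (ENNReal.ofReal p) ν)
    (L : ℝ) (hL : 0 < L)
    (hLip : ∀ u v, ‖f u - f v‖ ≤ L * (G.dist u v : ℝ)) :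
    ∑ u, ∑ v, ‖f u - f v‖ ^ p * (m u * m v) / (∑ w, m w) ^ 2 ≤
      (1 + s) * K * L ^ p / (s * c') :=
  stmt11_general G K hdeg m hm s hs hratio p hp c' hc' hPoincare ν f L hL hLip
end

section
/- Let {(V_n, E_n, m_n)} be a sequence of finite measured graphs (connected, with edge-path metrics), and let Y = ⊔_k Y_k be a sparse metric space (finite pieces Y_k with d(Y_k, Y_l) → ∞ as k+l → ∞, k ≠ l). Suppose f_n: V_n → Y is a sequence of L-Lipschitz maps such that for every R > 0, sup_{x∈V_n} m_n(f_n^{-1}(B(f_n(x),R)))/m_n(V_n) → 0 as n → ∞ (a measured weak embedding). Then for every y ∈ Y, the set {n : f_n^{-1}(y) ≠ ∅} is finite. -/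
open scoped Classical
open Finset

/-- a measured weak embedding of connected measured graphs into a
sparse space hits each point for only finitely many indices n. -/
theorem stmt13 {V : ℕ → Type*} [∀ n, Fintype (V n)]
    (G : ∀ n, SimpleGraph (V n)) (hconn : ∀ n, (G n).Connected)
    (m : ∀ n, V n → ℝ) (hm : ∀ n x, 0 < m n x)
    {Y : Type*} [MetricSpace Y] (Yk : ℕ → Set Y)
    (hfin : ∀ k, (Yk k).Finite) (hne : ∀ k, (Yk k).Nonempty)
    (hdisj : ∀ k l, k ≠ l → Disjoint (Yk k) (Yk l))
    (hcover : (⋃ k, Yk k) = Set.univ)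
    (hsparse : ∀ D : ℝ, ∃ N : ℕ, ∀ k l, k ≠ l → N ≤ k + l →
      ∀ y ∈ Yk k, ∀ y' ∈ Yk l, D < dist y y')
    (f : ∀ n, V n → Y) (L : ℝ) (hL : 0 < L)
    (hLip : ∀ n, ∀ u v : V n, dist (f n u) (f n v) ≤ L * ((G n).dist u v : ℝ))
    (hmwe : ∀ R > (0:ℝ), ∀ ε > (0:ℝ), ∃ N : ℕ, ∀ n ≥ N, ∀ x : V n,
      (∑ z ∈ univ.filter (fun z => dist (f n z) (f n x) ≤ R), m n z)
        / (∑ z, m n z) < ε) :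
    ∀ y : Y, {n : ℕ | ∃ x : V n, f n x = y}.Finite := by
  intro y
  obtain ⟨k₀, hk₀⟩ : ∃ k, y ∈ Yk k := by
    have : y ∈ ⋃ k, Yk k := hcover ▸ Set.mem_univ y
    simpa using this
  obtain ⟨N₀, hN₀⟩ := hsparse L
  set K := max N₀ (k₀ + 1) with hK
  set E : Set Y := ⋃ k ∈ Finset.range K, Yk k with hEdef
  have hEfin : E.Finite :=
    Set.Finite.biUnion (Finset.range K).finite_toSet (fun k _ => hfin k)
  have hyE : y ∈ E :=
    Set.mem_biUnion (Finset.mem_range.mpr (lt_of_lt_of_le (Nat.lt_succ_self k₀)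
      (le_max_right _ _))) hk₀
  have step : ∀ a b : Y, dist a b ≤ L → a ∈ E → b ∈ E := by
    intro a b hab ha
    simp only [hEdef, Set.mem_iUnion, Finset.mem_range, exists_prop] at ha ⊢
    obtain ⟨k, hkK, hak⟩ := ha
    obtain ⟨l, hbl⟩ : ∃ l, b ∈ Yk l := by
      have : b ∈ ⋃ k, Yk k := hcover ▸ Set.mem_univ b
      simpa using this
    rcases eq_or_ne k l with rfl | hkl
    · exact ⟨k, hkK, hbl⟩
    · by_cases hNl : N₀ ≤ k + l
      · exact absurd (hN₀ k l hkl hNl a hak b hbl) (not_lt.mpr hab)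
      · exact ⟨l, lt_of_lt_of_le (by omega) (le_max_left _ _), hbl⟩
  have claim : ∀ n (x₀ : V n), f n x₀ = y → ∀ v, f n v ∈ E := by
    intro n x₀ hx₀ v
    obtain ⟨p⟩ := (hconn n).preconnected x₀ v
    have key : ∀ {a b : V n} (q : (G n).Walk a b), f n a ∈ E → f n b ∈ E := by
      intro a b q
      induction q with
      | nil => exact id
      | @cons u w b h q ih =>
        intro ha
        apply ih
        apply step _ _ _ ha
        have hd : (G n).dist u w ≤ 1 :=
          SimpleGraph.dist_le (SimpleGraph.Walk.cons h SimpleGraph.Walk.nil)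
        calc dist (f n u) (f n w) ≤ L * ((G n).dist u w : ℝ) := hLip n u w
          _ ≤ L * 1 := by
              have : ((G n).dist u w : ℝ) ≤ 1 := by exact_mod_cast hd
              nlinarith
          _ = L := mul_one L
    exact key p (hx₀ ▸ hyE)
  obtain ⟨C, hC⟩ := Metric.isBounded_iff.mp hEfin.isBounded
  obtain ⟨N, hN⟩ := hmwe (max C 1) (lt_of_lt_of_le one_pos (le_max_right C 1))
    (1/2) (by norm_num)
  apply (Set.finite_Iio N).subset
  intro n hn
  simp only [Set.mem_setOf_eq] at hn
  obtain ⟨x₀, hx₀⟩ := hn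
  by_contra hlt
  have hnN : N ≤ n := not_lt.mp (by simpa [Set.mem_Iio] using hlt)
  have h1 := hN n hnN x₀
  have hall : ∀ z : V n, dist (f n z) (f n x₀) ≤ max C 1 := fun z =>
    le_trans (hC (claim n x₀ hx₀ z) (claim n x₀ hx₀ x₀)) (le_max_left _ _)
  have hfil : (univ.filter (fun z => dist (f n z) (f n x₀) ≤ max C 1)) = univ :=
    Finset.filter_true_of_mem (fun z _ => hall z)
  rw [hfil] at h1
  have : Nonempty (V n) := (hconn n).nonempty
  have hpos : 0 < ∑ z, m n z := Finset.sum_pos (fun z _ => hm n z) Finset.univ_nonempty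
  rw [div_self hpos.ne'] at h1
  norm_num at h1
end

section
/- Let {(X_n,d_n,m_n)} be a sequence of finite probability-measured metric spaces. Suppose there exist c > 0, sequences α_k → 0 in (0,1) and R_k > 0, such that for all n, k there are subsets Y_{n,k} ⊆ X_n with: (i) m_n(Y_{n,k}) ≥ 1−α_k; (ii) for each A ⊆ Y_{n,k} with 0 < m_n(A) ≤ (1/2)m_n(Y_{n,k}), m_n(∂_{R_k}^{Y_{n,k}} A) > c·m_n(A). Then {(X_n,d_n,m_n)} is a sequence of measured asymptotic expanders: for every α ∈ (0,1/2] there exist c_α > 0 and R_α > 0 such that for all n and A ⊆ X_n with α ≤ m_n(A) ≤ 1/2 one has m_n(∂_{R_α} A) > c_α·m_n(A). -/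
open scoped Classical
open Finset

/-- a uniform exhaustion by expanding subspaces Y_{n,k} implies that
the sequence is a sequence of measured asymptotic expanders. -/
theorem stmt14 {X : ℕ → Type*} [∀ n, Fintype (X n)] [∀ n, MetricSpace (X n)]
    (m : ∀ n, X n → ℝ) (hm0 : ∀ n x, 0 ≤ m n x) (hm1 : ∀ n, ∑ x, m n x = 1)
    (c : ℝ) (hc : 0 < c) (α R : ℕ → ℝ)
    (hα : ∀ k, α k ∈ Set.Ioo (0:ℝ) 1)
    (hαlim : Filter.Tendsto α Filter.atTop (nhds 0))
    (hR : ∀ k, 0 < R k)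
    (Ynk : ∀ n : ℕ, ℕ → Finset (X n))
    (hYm : ∀ n k, 1 - α k ≤ ∑ x ∈ Ynk n k, m n x)
    (hYexp : ∀ n k, ∀ A ⊆ Ynk n k,
      0 < ∑ x ∈ A, m n x → ∑ x ∈ A, m n x ≤ (∑ x ∈ Ynk n k, m n x) / 2 →
      c * ∑ x ∈ A, m n x <
        ∑ x ∈ (Ynk n k).filter (fun y => y ∉ A ∧ ∃ a ∈ A, dist y a ≤ R k), m n x) :
    ∀ α' ∈ Set.Ioc (0:ℝ) (1/2), ∃ c' > (0:ℝ), ∃ R' > (0:ℝ),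
      ∀ n : ℕ, ∀ A : Finset (X n),
        α' ≤ ∑ x ∈ A, m n x → ∑ x ∈ A, m n x ≤ 1/2 →
        c' * ∑ x ∈ A, m n x <
          ∑ x ∈ univ.filter (fun y => y ∉ A ∧ ∃ a ∈ A, dist y a ≤ R'), m n x := by
  intro α' hα'
  obtain ⟨hα'0, hα'2⟩ := hα'
  have hε : (0:ℝ) < min (α'/2) (1/4) := lt_min (by linarith) (by norm_num)
  have hev : ∀ᶠ k in Filter.atTop, α k < min (α'/2) (1/4) :=
    hαlim.eventually (eventually_lt_nhds hε)
  obtain ⟨k, hk⟩ := hev.exists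
  have hk1 : α k < α'/2 := lt_of_lt_of_le hk (min_le_left _ _)
  have hk2 : α k < 1/4 := lt_of_lt_of_le hk (min_le_right _ _)
  refine ⟨c/(2*(1+c)), by positivity, R k, hR k, ?_⟩
  intro n A hA1 hA2
  set Y := Ynk n k with hYdef
  set B := A ∩ Y with hBdef
  have hnn : ∀ T : Finset (X n), 0 ≤ ∑ x ∈ T, m n x :=
    fun T => Finset.sum_nonneg fun x _ => hm0 n x
  have hmono : ∀ T T' : Finset (X n), T ⊆ T' → ∑ x ∈ T, m n x ≤ ∑ x ∈ T', m n x :=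
    fun T T' h => Finset.sum_le_sum_of_subset_of_nonneg h (fun x _ _ => hm0 n x)
  -- complement of Y is small
  have hsdU : ∑ x ∈ univ \ Y, m n x + ∑ x ∈ Y, m n x = ∑ x, m n x :=
    Finset.sum_sdiff (Finset.subset_univ Y)
  have hYc : ∑ x ∈ univ \ Y, m n x ≤ α k := by
    have h1 := hYm n k
    have h2 := hm1 n
    rw [← hYdef] at h1
    linarith
  -- B = A ∩ Y captures most of A
  have hsdA : ∑ x ∈ A \ B, m n x + ∑ x ∈ B, m n x = ∑ x ∈ A, m n x :=
    Finset.sum_sdiff Finset.inter_subset_left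
  have hABsub : A \ B ⊆ univ \ Y := by
    intro x hx
    simp only [hBdef, Finset.mem_sdiff, Finset.mem_inter, Finset.mem_univ, true_and] at hx ⊢
    tauto
  have hBlb : ∑ x ∈ A, m n x - α k ≤ ∑ x ∈ B, m n x := by
    have := (hmono _ _ hABsub).trans hYc
    linarith
  have hBleA : ∑ x ∈ B, m n x ≤ ∑ x ∈ A, m n x :=
    hmono _ _ Finset.inter_subset_left
  -- the boundary of B inside Y is contained in the target set
  set D : Finset (X n) := Y.filter (fun y => y ∉ B ∧ ∃ a ∈ B, dist y a ≤ R k) with hDdef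
  have hDsub : D ⊆ univ.filter (fun y => y ∉ A ∧ ∃ a ∈ A, dist y a ≤ R k) := by
    intro y hy
    simp only [hDdef, hBdef, Finset.mem_filter, Finset.mem_inter, Finset.mem_univ,
      true_and] at hy ⊢
    obtain ⟨hyY, hyB, a, ⟨haA, _⟩, hd⟩ := hy
    exact ⟨fun hyA => hyB ⟨hyA, hyY⟩, a, haA, hd⟩
  have hDle := hmono _ _ hDsub
  suffices h : c/(2*(1+c)) * ∑ x ∈ A, m n x < ∑ x ∈ D, m n x by linarith
  by_cases hBle : ∑ x ∈ B, m n x ≤ (∑ x ∈ Y, m n x) / 2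
  · -- easy case: apply expansion directly to B
    have hBpos : 0 < ∑ x ∈ B, m n x := by linarith
    have hexp := hYexp n k B Finset.inter_subset_right hBpos hBle
    rw [← hYdef, ← hDdef] at hexp
    have hSB : (∑ x ∈ A, m n x)/2 < ∑ x ∈ B, m n x := by linarith
    calc c/(2*(1+c)) * ∑ x ∈ A, m n x
        ≤ c/2 * ∑ x ∈ A, m n x := by
          apply mul_le_mul_of_nonneg_right _ (hnn A)
          rw [div_le_div_iff₀ (by positivity) (by norm_num : (0:ℝ) < 2)]
          nlinarith [mul_pos hc hc]
      _ = c * ((∑ x ∈ A, m n x)/2) := by ring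
      _ < c * ∑ x ∈ B, m n x := mul_lt_mul_of_pos_left hSB hc
      _ < ∑ x ∈ D, m n x := hexp
  · push_neg at hBle
    -- hard case: 1/2 barrier argument
    set B' : Finset (X n) := Y \ B with hB'def
    have hsdY : ∑ x ∈ B', m n x + ∑ x ∈ B, m n x = ∑ x ∈ Y, m n x :=
      Finset.sum_sdiff Finset.inter_subset_right
    have hYlb := hYm n k
    rw [← hYdef] at hYlb
    have hB'lb : 1/2 - α k ≤ ∑ x ∈ B', m n x := by linarith
    set W : Finset (X n) := B'.filter (fun y => ¬ ∃ a ∈ B, dist y a ≤ R k) with hWdef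
    have hDeq : D = B' \ W := by
      ext y
      simp only [hDdef, hB'def, hWdef, Finset.mem_filter, Finset.mem_sdiff]
      constructor
      · rintro ⟨hyY, hyB, hnear⟩
        exact ⟨⟨hyY, hyB⟩, fun h => h.2 hnear⟩
      · rintro ⟨⟨hyY, hyB⟩, hnw⟩
        refine ⟨hyY, hyB, ?_⟩
        by_contra hcon
        exact hnw ⟨⟨hyY, hyB⟩, hcon⟩
    have hsdW : ∑ x ∈ D, m n x + ∑ x ∈ W, m n x = ∑ x ∈ B', m n x := by
      rw [hDeq]
      exact Finset.sum_sdiff (Finset.filter_subset _ _)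
    by_cases hW : 0 < ∑ x ∈ W, m n x
    · have hWY : W ⊆ Y := (Finset.filter_subset _ _).trans (Finset.sdiff_subset)
      have hWhalf : ∑ x ∈ W, m n x ≤ (∑ x ∈ Y, m n x) / 2 := by
        have := hnn D
        linarith
      have hexpW := hYexp n k W hWY hW hWhalf
      rw [← hYdef] at hexpW
      have hsubW : Y.filter (fun y => y ∉ W ∧ ∃ a ∈ W, dist y a ≤ R k) ⊆ D := by
        intro y hy
        simp only [Finset.mem_filter] at hy
        obtain ⟨hyY, hyW, w, hwW, hd⟩ := hy
        have hwW' := hwW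
        simp only [hWdef, hB'def, Finset.mem_filter, Finset.mem_sdiff] at hwW'
        obtain ⟨⟨hwY, hwB⟩, hwfar⟩ := hwW'
        have hyB : y ∉ B := by
          intro hyB
          exact hwfar ⟨y, hyB, by rwa [dist_comm]⟩
        have hyB' : y ∈ B' := by
          simp only [hB'def, Finset.mem_sdiff]; exact ⟨hyY, hyB⟩
        have : ∃ a ∈ B, dist y a ≤ R k := by
          by_contra hcon
          exact hyW (by simp only [hWdef, Finset.mem_filter]; exact ⟨hyB', hcon⟩)
        simp only [hDdef, Finset.mem_filter]
        exact ⟨hyY, hyB, this⟩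
      have hle := hmono _ _ hsubW
      have hWeq : ∑ x ∈ W, m n x = ∑ x ∈ B', m n x - ∑ x ∈ D, m n x := by linarith
      have h1 : c * (∑ x ∈ B', m n x - ∑ x ∈ D, m n x) < ∑ x ∈ D, m n x := by
        rw [← hWeq]; exact hexpW.trans_le hle
      have h2 : c * (1/4 : ℝ) ≤ c * ∑ x ∈ B', m n x :=
        mul_le_mul_of_nonneg_left (by linarith) hc.le
      have h3 : c * ∑ x ∈ A, m n x ≤ c * (1/2 : ℝ) :=
        mul_le_mul_of_nonneg_left hA2 hc.le
      rw [div_mul_eq_mul_div, div_lt_iff₀ (by positivity)]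
      nlinarith [hnn D, hc]
    · push_neg at hW
      have hW0 : ∑ x ∈ W, m n x = 0 := le_antisymm hW (hnn W)
      have hDB' : ∑ x ∈ D, m n x = ∑ x ∈ B', m n x := by linarith
      have hD4 : (1/4 : ℝ) < ∑ x ∈ D, m n x := by linarith
      have h4 := mul_lt_mul_of_pos_left hD4 hc
      have h3 : c * ∑ x ∈ A, m n x ≤ c * (1/2 : ℝ) :=
        mul_le_mul_of_nonneg_left hA2 hc.le
      rw [div_mul_eq_mul_div, div_lt_iff₀ (by positivity)]
      nlinarith [hnn D, hc]
end

section
/- Let (V,E) be a finite connected graph with valency bounded by K ≥ 1, m a full-support measure on V, c > 0 and α ∈ (0,1) such that every B ⊆ V with 0 < m(B) ≤ (1−α)·m(V) satisfies m(∂B) > c·m(B). Let A ⊆ V with m(A) ≥ α·m(V), and for i ≥ 1 set U_i := V \ N_i(A), where N_i(A) is the i-neighbourhood of A in the edge-path metric. Then m(U_{i+1}) ≤ m(V)/(1+c)^i for every i ≥ 1. -/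
open scoped Classical
open Finset

/-- exponential decay of the measure of the complements of
neighbourhoods of a large set A in an expanding graph. -/
theorem stmt18 {V : Type*} [Fintype V] (G : SimpleGraph V) (hconn : G.Connected)
    (K : ℕ) (hK : 1 ≤ K) (hdeg : ∀ v, (univ.filter (fun u => G.Adj v u)).card ≤ K)
    (m : V → ℝ) (hm : ∀ v, 0 < m v)
    (c α : ℝ) (hc : 0 < c) (hα : α ∈ Set.Ioo (0:ℝ) 1)
    (hexp : ∀ B : Finset V, 0 < ∑ v ∈ B, m v →
      ∑ v ∈ B, m v ≤ (1 - α) * ∑ v, m v →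
      c * ∑ v ∈ B, m v <
        ∑ v ∈ univ.filter (fun x => x ∉ B ∧ ∃ b ∈ B, G.Adj b x), m v)
    (A : Finset V) (hA : α * ∑ v, m v ≤ ∑ v ∈ A, m v) :
    ∀ i : ℕ, 1 ≤ i →
      ∑ v ∈ univ.filter (fun x => ¬ ∃ a ∈ A, G.dist x a ≤ i + 1), m v ≤
        (∑ v, m v) / (1 + c) ^ i := by
  set S : ℕ → Finset V := fun k => univ.filter (fun x => ¬ ∃ a ∈ A, G.dist x a ≤ k) with hS
  have hmono : ∀ k, S (k + 1) ⊆ S k := by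
    intro k x hx
    simp only [hS, mem_filter, mem_univ, true_and] at hx ⊢
    intro ⟨a, ha, hd⟩
    exact hx ⟨a, ha, hd.trans (Nat.le_succ k)⟩
  have hsub : ∀ k, S k ⊆ univ \ A := by
    intro k x hx
    simp only [hS, mem_filter, mem_univ, true_and] at hx
    simp only [mem_sdiff, mem_univ, true_and]
    intro hxA
    exact hx ⟨x, hxA, by rw [SimpleGraph.dist_self]; exact Nat.zero_le k⟩
  have hnn : ∀ (T : Finset V), 0 ≤ ∑ v ∈ T, m v :=
    fun T => Finset.sum_nonneg fun v _ => (hm v).le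
  have hsmall : ∀ k, ∑ v ∈ S k, m v ≤ (1 - α) * ∑ v, m v := by
    intro k
    have h1 : ∑ v ∈ S k, m v ≤ ∑ v ∈ univ \ A, m v :=
      Finset.sum_le_sum_of_subset_of_nonneg (hsub k) (fun v _ _ => (hm v).le)
    have h2 : ∑ v ∈ univ \ A, m v = ∑ v, m v - ∑ v ∈ A, m v :=
      Finset.sum_sdiff_eq_sub (Finset.subset_univ A)
    nlinarith [hA]
  have hc1 : (0:ℝ) < 1 + c := by linarith
  -- key step
  have hstep : ∀ k, (1 + c) * ∑ v ∈ S (k + 2), m v ≤ ∑ v ∈ S (k + 1), m v := by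
    intro k
    rcases le_or_gt (∑ v ∈ S (k + 2), m v) 0 with h0 | h0
    · have := hnn (S (k+1))
      nlinarith
    · have hb := hexp (S (k + 2)) h0 (hsmall _)
      set B := S (k + 2)
      set D := univ.filter (fun x => x ∉ B ∧ ∃ b ∈ B, G.Adj b x) with hD
      have hDsub : D ⊆ S (k + 1) \ B := by
        intro x hx
        simp only [hD, mem_filter, mem_univ, true_and] at hx
        obtain ⟨hxB, b, hbB, hadj⟩ := hx
        refine mem_sdiff.mpr ⟨?_, hxB⟩
        simp only [hS, mem_filter, mem_univ, true_and]
        rintro ⟨a, ha, hd⟩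
        have hbS : b ∈ S (k + 2) := hbB
        simp only [hS, mem_filter, mem_univ, true_and] at hbS
        apply hbS
        refine ⟨a, ha, ?_⟩
        have htri := hconn.dist_triangle (u := b) (v := x) (w := a)
        have h1 : G.dist b x ≤ 1 := by
          have := SimpleGraph.dist_le (G := G) hadj.toWalk
          simpa using this
        omega
      have hle : ∑ v ∈ D, m v ≤ ∑ v ∈ S (k + 1) \ B, m v :=
        Finset.sum_le_sum_of_subset_of_nonneg hDsub (fun v _ _ => (hm v).le)
      have heq : ∑ v ∈ S (k + 1) \ B, m v = ∑ v ∈ S (k + 1), m v - ∑ v ∈ B, m v :=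
        Finset.sum_sdiff_eq_sub (hmono (k + 1))
      nlinarith
  -- induction
  have hmain : ∀ i : ℕ, ∑ v ∈ S (i + 1), m v ≤ (∑ v, m v) / (1 + c) ^ i := by
    intro i
    induction i with
    | zero =>
      simpa using Finset.sum_le_sum_of_subset_of_nonneg (Finset.subset_univ (S 1))
        (fun v _ _ => (hm v).le)
    | succ n ih =>
      have hkey := hstep n
      have hpow : (0:ℝ) < (1 + c) ^ n := pow_pos hc1 n
      rw [pow_succ, ← div_div, le_div_iff₀ hc1]
      nlinarith [hnn (S (n + 2))]
  intro i _
  exact hmain i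
end
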